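/- Let n ∈ ℕ and s, s' > 0. Then for every Y ∈ ℝ^d: 0 < φ(s,s',Y), and ((s+s')/(2√(s·s')))^n · (4ss'/(s+s')²)^{|I|} ≤ φ(s,s',Y) ≤ ((s+s')/(2√(s·s')))^n. In particular, for fixed s, s' > 0 the function Y ↦ φ(s,s',Y) is real, positive and bounded on ℝ^d. (This is the claim following equation (13), which guarantees absolute convergence of the prequantum BKS pairing integral.) -/
import Mathlib

open scoped Real BigOperators

lemma convexOn_sinh : ConvexOn ℝ (Set.Ici (0:ℝ)) Real.sinh := by
  apply convexOn_of_deriv2_nonneg (convex_Ici 0) Real.continuous_sinh.continuousOn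
    Real.differentiable_sinh.differentiableOn
  · rw [Real.deriv_sinh]
    exact Real.differentiable_cosh.differentiableOn
  · intro x hx
    rw [interior_Ici] at hx
    simp [Function.iterate_succ, Real.deriv_sinh, Real.deriv_cosh]
    exact hx.le

/-- `sinhc x = sinh x / x` for `x ≠ 0`, and `sinhc 0 = 1`. -/
noncomputable def sinhc (x : ℝ) : ℝ := if x = 0 then 1 else Real.sinh x / x

lemma sinhc_pos (x : ℝ) : 0 < sinhc x := by
  unfold sinhc
  rcases lt_trichotomy x 0 with h | h | h
  · rw [if_neg h.ne]
    exact div_pos_of_neg_of_neg (Real.sinh_neg_iff.2 h) h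
  · simp [h]
  · rw [if_neg h.ne']
    exact div_pos (Real.sinh_pos_iff.2 h) h

lemma mul_sinh_le {a b : ℝ} (ha : 0 ≤ a) (hab : a ≤ b) :
    b * Real.sinh a ≤ a * Real.sinh b := by
  rcases eq_or_lt_of_le (ha.trans hab) with hb | hb
  · have : a = 0 := le_antisymm (hab.trans hb.symm.le) ha
    simp [this, ← hb]
  have h1 : (0:ℝ) ∈ Set.Ici (0:ℝ) := Set.self_mem_Ici
  have h2 : b ∈ Set.Ici (0:ℝ) := Set.mem_Ici.2 hb.le
  have hw1 : (0:ℝ) ≤ 1 - a / b := by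
    have : a / b ≤ 1 := div_le_one_of_le₀ hab hb.le
    linarith
  have hw2 : (0:ℝ) ≤ a / b := div_nonneg ha hb.le
  have := convexOn_sinh.2 h1 h2 hw1 hw2 (by ring)
  simp only [smul_eq_mul, mul_zero, zero_add, Real.sinh_zero] at this
  rw [div_mul_cancel₀ a hb.ne'] at this
  calc b * Real.sinh a ≤ b * (a / b * Real.sinh b) := by
        apply mul_le_mul_of_nonneg_left _ hb.le
        simpa using this
    _ = a * Real.sinh b := by field_simp

/-- `u^2 * (cosh v - 1) ≤ v^2 * (cosh u - 1)` when `v^2 ≤ u^2`. -/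
lemma key2 {v u : ℝ} (h : v ^ 2 ≤ u ^ 2) :
    u ^ 2 * (Real.cosh v - 1) ≤ v ^ 2 * (Real.cosh u - 1) := by
  wlog hv : 0 ≤ v generalizing v
  · have := this (v := -v) (by simpa using h) (by linarith)
    simpa using this
  wlog hu : 0 ≤ u generalizing u
  · have := this (u := -u) (by simpa using h) (by linarith)
    simpa using this
  have hvu : v ≤ u := by nlinarith
  -- cosh x - 1 = 2 sinh(x/2)^2
  have cv : Real.cosh v = Real.cosh (v/2) ^ 2 + Real.sinh (v/2) ^ 2 := by
    have := Real.cosh_add (v/2) (v/2)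
    rw [show v/2 + v/2 = v by ring] at this
    nlinarith [this]
  have cu : Real.cosh u = Real.cosh (u/2) ^ 2 + Real.sinh (u/2) ^ 2 := by
    have := Real.cosh_add (u/2) (u/2)
    rw [show u/2 + u/2 = u by ring] at this
    nlinarith [this]
  have pv := Real.cosh_sq_sub_sinh_sq (v/2)
  have pu := Real.cosh_sq_sub_sinh_sq (u/2)
  -- so goal becomes u^2 * 2 sinh(v/2)^2 ≤ v^2 * 2 sinh(u/2)^2
  have key : u * Real.sinh (v/2) ≤ v * Real.sinh (u/2) := by
    have := mul_sinh_le (by linarith : (0:ℝ) ≤ v/2) (by linarith : v/2 ≤ u/2)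
    linarith
  have h1 : 0 ≤ u * Real.sinh (v/2) :=
    mul_nonneg hu (Real.sinh_nonneg_iff.2 (by linarith))
  nlinarith [key, h1, sq_nonneg (v * Real.sinh (u/2))]

/-- `sinh(st) sinh(s't) ≤ sinh(((s+s')/2) t)^2` for all real arguments. -/
lemma key1 (s s' t : ℝ) :
    Real.sinh (s*t) * Real.sinh (s'*t) ≤ Real.sinh ((s+s')/2*t) ^ 2 := by
  have h1 := Real.cosh_add (s*t) (s'*t)
  have h2 := Real.cosh_sub (s*t) (s'*t)
  have h3 := Real.one_le_cosh (s*t - s'*t)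
  have h4 := Real.cosh_add ((s+s')/2*t) ((s+s')/2*t)
  have h5 := Real.cosh_sq_sub_sinh_sq ((s+s')/2*t)
  rw [show s*t + s'*t = (s+s')/2*t + (s+s')/2*t by ring] at h1
  nlinarith [h1, h2, h3, h4, h5]

/-- Per-factor upper bound: `sinhc(mt)^2 ≤ sinhc(st) sinhc(s't)`. -/
lemma factor_upper {s s' : ℝ} (hs : 0 < s) (hs' : 0 < s') (t : ℝ) :
    sinhc ((s+s')/2*t) ^ 2 ≤ sinhc (s*t) * sinhc (s'*t) := by
  rcases eq_or_ne t 0 with rfl | ht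
  · simp [sinhc]
  have hm : (0:ℝ) < (s+s')/2 := by linarith
  have h1 : s*t ≠ 0 := mul_ne_zero hs.ne' ht
  have h2 : s'*t ≠ 0 := mul_ne_zero hs'.ne' ht
  have h3 : (s+s')/2*t ≠ 0 := mul_ne_zero hm.ne' ht
  unfold sinhc
  have hP : (0:ℝ) < ((s+s')/2*t)^2 := by positivity
  have hQ : (0:ℝ) < s*t*(s'*t) := by
    rw [show s*t*(s'*t) = s*s'*t^2 by ring]; positivity
  rw [if_neg h1, if_neg h2, if_neg h3, div_pow, div_mul_div_comm,
    div_le_div_iff₀ hP hQ]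
  -- goal: sinh(mt)^2 * (s*t*(s'*t)) ≤ sinh(st)*sinh(s't) * (mt)^2
  have hC := Real.cosh_add (s*t) (s'*t)
  have hD := Real.cosh_sub (s*t) (s'*t)
  rw [show s*t + s'*t = (s+s')*t by ring] at hC
  rw [show s*t - s'*t = (s-s')*t by ring] at hD
  have hK := Real.cosh_add ((s+s')/2*t) ((s+s')/2*t)
  rw [show (s+s')/2*t + (s+s')/2*t = (s+s')*t by ring] at hK
  have hK2 := Real.cosh_sq_sub_sinh_sq ((s+s')/2*t)
  have hk2 := key2 (v := (s-s')*t) (u := (s+s')*t)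
    (by nlinarith [sq_nonneg t, mul_pos hs hs'])
  nlinarith [hk2, hC, hD, hK, hK2]

/-- Per-factor lower bound: `(4ss'/(s+s')^2) · sinhc(st) sinhc(s't) ≤ sinhc(mt)^2`. -/
lemma factor_lower {s s' : ℝ} (hs : 0 < s) (hs' : 0 < s') (t : ℝ) :
    4*s*s'/(s+s')^2 * (sinhc (s*t) * sinhc (s'*t)) ≤ sinhc ((s+s')/2*t) ^ 2 := by
  have hss : (0:ℝ) < (s+s')^2 := by positivity
  rcases eq_or_ne t 0 with rfl | ht
  · simp only [mul_zero, sinhc, if_pos]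
    rw [mul_one, mul_one, one_pow, div_le_one hss]
    nlinarith [sq_nonneg (s - s')]
  have hm : (0:ℝ) < (s+s')/2 := by linarith
  have h1 : s*t ≠ 0 := mul_ne_zero hs.ne' ht
  have h2 : s'*t ≠ 0 := mul_ne_zero hs'.ne' ht
  have h3 : (s+s')/2*t ≠ 0 := mul_ne_zero hm.ne' ht
  unfold sinhc
  rw [if_neg h1, if_neg h2, if_neg h3]
  have hk1 := key1 s s' t
  have hP : (0:ℝ) < ((s+s')/2*t)^2 := by positivity
  have hQ : (0:ℝ) < s*t*(s'*t) := by
    rw [show s*t*(s'*t) = s*s'*t^2 by ring]; positivity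
  rw [div_pow, div_mul_div_comm, ← mul_div_assoc, div_le_div_iff₀ hQ hP,
    div_mul_eq_mul_div, div_mul_eq_mul_div, div_le_iff₀ hss]
  nlinarith [mul_le_mul_of_nonneg_left hk1 (by positivity : (0:ℝ) ≤ 4*s*s'*(s+s')^2*t^2)]

/-- The function `η(Y) = ∏_{i ∈ I} sinhc (α_i Y)` (equation (5) of the paper). -/
noncomputable def eta {d : ℕ} {I : Type*} [Fintype I]
    (α : I → (EuclideanSpace ℝ (Fin d) →ₗ[ℝ] ℝ)) (Y : EuclideanSpace ℝ (Fin d)) : ℝ :=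
  ∏ i, sinhc (α i Y)

lemma eta_pos {d : ℕ} {I : Type*} [Fintype I]
    (α : I → (EuclideanSpace ℝ (Fin d) →ₗ[ℝ] ℝ)) (Y : EuclideanSpace ℝ (Fin d)) :
    0 < eta α Y :=
  Finset.prod_pos fun i _ => sinhc_pos _

/-- The function `φ(s,s',Y)` of equation (13) of the paper, with `n = dim K`. -/
noncomputable def phi {d : ℕ} {I : Type*} [Fintype I]
    (α : I → (EuclideanSpace ℝ (Fin d) →ₗ[ℝ] ℝ)) (n : ℕ) (s s' : ℝ)
    (Y : EuclideanSpace ℝ (Fin d)) : ℝ :=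
  ((s + s') / (2 * Real.sqrt (s * s'))) ^ n * (eta α (((s + s') / 2) • Y)) ^ 2 /
    (eta α (s • Y) * eta α (s' • Y))

/-- The claim following equation (13): for fixed `s, s' > 0` the function
`Y ↦ φ(s,s',Y)` is real, positive and bounded, with the explicit two-sided bounds. -/
theorem statement_6 {d : ℕ} (hd : 1 ≤ d) {I : Type*} [Fintype I]
    (α : I → (EuclideanSpace ℝ (Fin d) →ₗ[ℝ] ℝ)) (n : ℕ)
    {s s' : ℝ} (hs : 0 < s) (hs' : 0 < s') (Y : EuclideanSpace ℝ (Fin d)) :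
    0 < phi α n s s' Y ∧
    ((s + s') / (2 * Real.sqrt (s * s'))) ^ n *
        (4 * s * s' / (s + s') ^ 2) ^ (Fintype.card I) ≤ phi α n s s' Y ∧
    phi α n s s' Y ≤ ((s + s') / (2 * Real.sqrt (s * s'))) ^ n := by
  set C : ℝ := (s + s') / (2 * Real.sqrt (s * s')) with hCdef
  have hC : 0 < C := by
    apply div_pos (by linarith)
    have : 0 < Real.sqrt (s * s') := Real.sqrt_pos.2 (mul_pos hs hs')
    linarith
  have hE : 0 < eta α (((s + s') / 2) • Y) := eta_pos α _
  have hDs : 0 < eta α (s • Y) := eta_pos α _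
  have hDs' : 0 < eta α (s' • Y) := eta_pos α _
  have hD : 0 < eta α (s • Y) * eta α (s' • Y) := mul_pos hDs hDs'
  have hmap : ∀ (c : ℝ) (i : I), α i (c • Y) = c * α i Y := fun c i => by
    rw [map_smul, smul_eq_mul]
  -- upper bound on eta ratio
  have hUpper : eta α (((s + s') / 2) • Y) ^ 2 ≤ eta α (s • Y) * eta α (s' • Y) := by
    unfold eta
    rw [← Finset.prod_pow, ← Finset.prod_mul_distrib]
    apply Finset.prod_le_prod (fun i _ => sq_nonneg _)
    intro i _
    rw [hmap, hmap, hmap]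
    exact factor_upper hs hs' (α i Y)
  set c : ℝ := 4 * s * s' / (s + s') ^ 2 with hcdef
  have hc : 0 < c := by positivity
  have hLower : c ^ (Fintype.card I) * (eta α (s • Y) * eta α (s' • Y)) ≤
      eta α (((s + s') / 2) • Y) ^ 2 := by
    unfold eta
    rw [← Finset.prod_pow, ← Finset.prod_mul_distrib, ← Finset.card_univ,
      ← Finset.prod_const, ← Finset.prod_mul_distrib]
    apply Finset.prod_le_prod
    · intro i _
      exact mul_nonneg hc.le (mul_nonneg (sinhc_pos _).le (sinhc_pos _).le)
    · intro i _
      rw [hmap, hmap, hmap]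
      exact factor_lower hs hs' (α i Y)
  have hphi : phi α n s s' Y = C ^ n * eta α (((s + s') / 2) • Y) ^ 2 /
      (eta α (s • Y) * eta α (s' • Y)) := rfl
  refine ⟨?_, ?_, ?_⟩
  · rw [hphi]
    positivity
  · rw [hphi, le_div_iff₀ hD]
    calc C ^ n * c ^ (Fintype.card I) * (eta α (s • Y) * eta α (s' • Y))
        = C ^ n * (c ^ (Fintype.card I) * (eta α (s • Y) * eta α (s' • Y))) := by ring
      _ ≤ C ^ n * eta α (((s + s') / 2) • Y) ^ 2 :=
          mul_le_mul_of_nonneg_left hLower (by positivity)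
  · rw [hphi, div_le_iff₀ hD]
    calc C ^ n * eta α (((s + s') / 2) • Y) ^ 2
        ≤ C ^ n * (eta α (s • Y) * eta α (s' • Y)) :=
          mul_le_mul_of_nonneg_left hUpper (by positivity)
      _ = C ^ n * (eta α (s • Y) * eta α (s' • Y)) := rfl
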